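/- Let X ∈ ℝ^{N×d}, Y ∈ ℝ^{N×K} with Y in the range of X (XX†Y = Y). Then max over Λ ∈ ℝ^{N×K} with ‖ΛᵀX‖₂ ≤ c of tr(ΛᵀY) equals c·‖X†Y‖_*, where ‖·‖_* is the nuclear norm and ‖·‖₂ the spectral norm. -/

import Mathlib

open Matrix

/-- Euclidean norm of a vector. -/
noncomputable def vecNorm {n : ℕ} (v : Fin n → ℝ) : ℝ := Real.sqrt (∑ i, (v i) ^ 2)

/-- Spectral (operator) norm of a real matrix. -/
noncomputable def specNorm {a b : ℕ} (M : Matrix (Fin a) (Fin b) ℝ) : ℝ :=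
  sSup {x : ℝ | ∃ v : Fin b → ℝ, vecNorm v ≤ 1 ∧ x = vecNorm (M.mulVec v)}

/-- The `j`-th singular value (unsorted) of a real matrix. -/
noncomputable def singVal {a b : ℕ} (M : Matrix (Fin a) (Fin b) ℝ) (j : Fin b) : ℝ :=
  Real.sqrt ((show (Mᵀ * M).IsHermitian by
    simpa using Matrix.isHermitian_conjTranspose_mul_self M).eigenvalues j)

/-- Nuclear norm of a real matrix: sum of its singular values. -/
noncomputable def nuclearNorm {a b : ℕ} (M : Matrix (Fin a) (Fin b) ℝ) : ℝ :=
  ∑ j, singVal M j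

/-- `Xd` is the Moore–Penrose pseudoinverse of `X` (the four Penrose conditions). -/
def IsMoorePenrose {a b : ℕ} (X : Matrix (Fin a) (Fin b) ℝ) (Xd : Matrix (Fin b) (Fin a) ℝ) : Prop :=
  X * Xd * X = X ∧ Xd * X * Xd = Xd ∧ (X * Xd)ᵀ = X * Xd ∧ (Xd * X)ᵀ = Xd * X

/-!
Write `A = X†Y`, so that `Y = X A`, and let `vⱼ` be orthonormal eigenvectors of `AᵀA`, so that
`‖A vⱼ‖ = σⱼ`. Then `tr(ΛᵀY) = tr(ΛᵀX A) = ∑ⱼ ⟪vⱼ, ΛᵀX A vⱼ⟫ ≤ ‖ΛᵀX‖₂ ∑ⱼ σⱼ`.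
The bound is attained at `Λᵀ = c Wᵀ X†`, where `W = A (AᵀA)^{+1/2}` is the partial isometry of the
polar decomposition of `A`: `WᵀW` is an orthogonal projection, so `‖W‖₂ ≤ 1`;
`tr(WᵀA) = tr (AᵀA)^{1/2} = ‖A‖_*`; and `X†X` fixes the columns of `W`, which lie in the range of
`A = X†Y`, so that `ΛᵀX = c Wᵀ`.
-/

open scoped Matrix.Norms.L2Operator

lemma vecNorm_eq_norm_toLp {n : ℕ} (v : Fin n → ℝ) : vecNorm v = ‖WithLp.toLp 2 v‖ := by
  simp [vecNorm, EuclideanSpace.norm_eq]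

lemma specNorm_eq_l2_opNorm {a b : ℕ} (M : Matrix (Fin a) (Fin b) ℝ) : specNorm M = ‖M‖ := by
  rw [l2_opNorm_def, ← ContinuousLinearMap.sSup_unitClosedBall_eq_norm, specNorm]
  congr 1
  ext x
  constructor
  · rintro ⟨v, hv, rfl⟩
    exact ⟨WithLp.toLp 2 v, by simpa [vecNorm_eq_norm_toLp] using hv,
      by simp [vecNorm_eq_norm_toLp]⟩
  · rintro ⟨v, hv, rfl⟩
    exact ⟨v.ofLp, by simpa [vecNorm_eq_norm_toLp] using hv, by rw [vecNorm_eq_norm_toLp]; rfl⟩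

lemma norm_toLp_sq {n : Type*} [Fintype n] (w : n → ℝ) : ‖WithLp.toLp 2 w‖ ^ 2 = w ⬝ᵥ w := by
  rw [EuclideanSpace.norm_sq_eq]
  simp [dotProduct, sq]

lemma trace_eq_sum_dotProduct_mulVec {n : Type*} [Fintype n] [DecidableEq n] (B : Matrix n n ℝ)
    (v : OrthonormalBasis n ℝ (EuclideanSpace ℝ n)) :
    B.trace = ∑ j, (v j).ofLp ⬝ᵥ (B *ᵥ (v j).ofLp) := by
  rw [← B.trace_toLin_eq (PiLp.basisFun 2 ℝ n), ← toLpLin_eq_toLin,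
    LinearMap.trace_eq_sum_inner _ v]
  simp [EuclideanSpace.inner_eq_star_dotProduct, dotProduct_comm]

lemma isHermitian_transpose_mul_self {m n : Type*} [Fintype m] (A : Matrix m n ℝ) :
    (Aᵀ * A).IsHermitian := by
  simpa using isHermitian_conjTranspose_mul_self A

section Conjugation

open Unitary

lemma trace_conjStarAlgAut {R n : Type*} [CommSemiring R] [StarRing R] [Fintype n]
    [DecidableEq n] (U : unitary (Matrix n n R)) (M : Matrix n n R) :
    (conjStarAlgAut R _ U M).trace = M.trace := by
  rw [conjStarAlgAut_apply, trace_mul_cycle, coe_star_mul_self, one_mul]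

lemma l2_opNorm_conjStarAlgAut {𝕜 n : Type*} [RCLike 𝕜] [Fintype n] [DecidableEq n]
    (U : unitary (Matrix n n 𝕜)) (M : Matrix n n 𝕜) :
    ‖conjStarAlgAut 𝕜 _ U M‖ = ‖M‖ := by
  rw [conjStarAlgAut_apply, Matrix.mul_assoc, CStarRing.norm_coe_unitary_mul, ← coe_star,
    CStarRing.norm_mul_coe_unitary]

end Conjugation

section SingularValues

variable {a b : ℕ} (A : Matrix (Fin a) (Fin b) ℝ)

lemma singVal_nonneg (j : Fin b) : 0 ≤ singVal A j :=
  Real.sqrt_nonneg _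

lemma nuclearNorm_nonneg : 0 ≤ nuclearNorm A :=
  Finset.sum_nonneg fun j _ => singVal_nonneg A j

lemma sq_singVal (j : Fin b) :
    singVal A j ^ 2 = (isHermitian_transpose_mul_self A).eigenvalues j := by
  refine Real.sq_sqrt ?_
  simpa using (posSemidef_conjTranspose_mul_self A).eigenvalues_nonneg j

lemma norm_mulVec_eigenvectorBasis (j : Fin b) :
    ‖WithLp.toLp 2 (A *ᵥ ((isHermitian_transpose_mul_self A).eigenvectorBasis j).ofLp)‖
      = singVal A j := by
  set hB := isHermitian_transpose_mul_self A
  set v := (hB.eigenvectorBasis j).ofLp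
  have hAv : (A *ᵥ v) ⬝ᵥ (A *ᵥ v) = hB.eigenvalues j := by
    rw [hB.eigenvalues_eq, dotProduct_mulVec, ← mulVec_transpose, mulVec_mulVec]
    simp [v, dotProduct_comm]
  rw [← sq_eq_sq₀ (norm_nonneg _) (singVal_nonneg A j), sq_singVal, norm_toLp_sq, hAv]

theorem trace_mul_le_l2_opNorm_mul_nuclearNorm (M : Matrix (Fin b) (Fin a) ℝ) :
    (M * A).trace ≤ ‖M‖ * nuclearNorm A := by
  set v := (isHermitian_transpose_mul_self A).eigenvectorBasis
  rw [trace_eq_sum_dotProduct_mulVec _ v, nuclearNorm, Finset.mul_sum]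
  refine Finset.sum_le_sum fun j _ => ?_
  calc (v j).ofLp ⬝ᵥ ((M * A) *ᵥ (v j).ofLp)
      = inner ℝ (v j) (WithLp.toLp 2 (M *ᵥ (A *ᵥ (v j).ofLp))) := by
        simp [EuclideanSpace.inner_eq_star_dotProduct, dotProduct_comm, mulVec_mulVec]
    _ ≤ ‖v j‖ * ‖WithLp.toLp 2 (M *ᵥ (A *ᵥ (v j).ofLp))‖ := real_inner_le_norm _ _
    _ ≤ 1 * (‖M‖ * ‖WithLp.toLp 2 (A *ᵥ (v j).ofLp)‖) := by
        gcongr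
        · exact (v.orthonormal.1 j).le
        · exact l2_opNorm_mulVec M (WithLp.toLp 2 (A *ᵥ (v j).ofLp))
    _ = ‖M‖ * singVal A j := by rw [one_mul, norm_mulVec_eigenvectorBasis]

open Unitary

noncomputable abbrev gramConj : Matrix (Fin b) (Fin b) ℝ ≃⋆ₐ[ℝ] Matrix (Fin b) (Fin b) ℝ :=
  conjStarAlgAut ℝ _ (isHermitian_transpose_mul_self A).eigenvectorUnitary

lemma transpose_mul_self_eq_gramConj_diagonal :
    Aᵀ * A = gramConj A (diagonal fun j => singVal A j ^ 2) := by
  simp_rw [sq_singVal]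
  conv_lhs => rw [(isHermitian_transpose_mul_self A).spectral_theorem]
  rfl

/-- `(AᵀA)^{+1/2}`, the square root of the pseudo-inverse of `AᵀA` (through `0⁻¹ = 0`). -/
noncomputable def gramPinvSqrt : Matrix (Fin b) (Fin b) ℝ :=
  gramConj A (diagonal fun j => (singVal A j)⁻¹)

/-- The partial isometry `W` of the polar decomposition `A = W (AᵀA)^{1/2}`. -/
noncomputable def polarIsometry : Matrix (Fin a) (Fin b) ℝ :=
  A * gramPinvSqrt A

lemma gramPinvSqrt_transpose : (gramPinvSqrt A)ᵀ = gramPinvSqrt A := by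
  rw [← conjTranspose_eq_transpose_of_trivial, ← star_eq_conjTranspose, gramPinvSqrt, ← map_star,
    star_eq_conjTranspose, diagonal_conjTranspose]
  rfl

lemma trace_transpose_polarIsometry_mul : ((polarIsometry A)ᵀ * A).trace = nuclearNorm A := by
  rw [polarIsometry, transpose_mul, gramPinvSqrt_transpose, Matrix.mul_assoc,
    transpose_mul_self_eq_gramConj_diagonal, gramPinvSqrt, ← map_mul, trace_conjStarAlgAut,
    diagonal_mul_diagonal, trace_diagonal, nuclearNorm]
  refine Finset.sum_congr rfl fun j _ => ?_
  rcases eq_or_ne (singVal A j) 0 with h | h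
  · simp [h]
  · field_simp

lemma l2_opNorm_polarIsometry_le_one : ‖polarIsometry A‖ ≤ 1 := by
  have hWW : (polarIsometry A)ᵀ * polarIsometry A
      = gramConj A (diagonal fun j => (singVal A j)⁻¹ * (singVal A j ^ 2 * (singVal A j)⁻¹)) := by
    rw [polarIsometry, transpose_mul, gramPinvSqrt_transpose, Matrix.mul_assoc,
      ← Matrix.mul_assoc Aᵀ, transpose_mul_self_eq_gramConj_diagonal, gramPinvSqrt, ← map_mul,
      ← map_mul, diagonal_mul_diagonal, diagonal_mul_diagonal]
  have hsq : ‖polarIsometry A‖ * ‖polarIsometry A‖ ≤ 1 := by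
    rw [← l2_opNorm_conjTranspose_mul_self, conjTranspose_eq_transpose_of_trivial, hWW,
      l2_opNorm_conjStarAlgAut, l2_opNorm_diagonal]
    refine pi_norm_le_iff_of_nonneg zero_le_one |>.2 fun j => ?_
    rcases eq_or_ne (singVal A j) 0 with h | h
    · simp [h]
    · field_simp
      simp
  nlinarith [norm_nonneg (polarIsometry A)]

end SingularValues

/-- If `Y` is in the range of `X` (`X X† Y = Y`), then the maximum of
`tr(Λᵀ Y)` over `Λ` with `‖Λᵀ X‖₂ ≤ c` equals `c · ‖X† Y‖_*`. -/
theorem dual_linear_max_eq_nuclear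
    (N d K : ℕ) (c : ℝ) (hc : 0 < c)
    (X : Matrix (Fin N) (Fin d) ℝ) (Y : Matrix (Fin N) (Fin K) ℝ)
    (Xd : Matrix (Fin d) (Fin N) ℝ) (hXd : IsMoorePenrose X Xd)
    (hY : X * (Xd * Y) = Y) :
    IsGreatest {x : ℝ | ∃ Λ : Matrix (Fin N) (Fin K) ℝ,
        specNorm (Λᵀ * X) ≤ c ∧ x = (Λᵀ * Y).trace}
      (c * nuclearNorm (Xd * Y)) := by
  obtain ⟨-, hXdXXd, -, hXdX⟩ := hXd
  set A := Xd * Y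
  set W := polarIsometry A
  have hWX : Wᵀ * (Xd * X) = Wᵀ := by
    rw [← hXdX, ← transpose_mul]
    simp only [W, polarIsometry, A, ← Matrix.mul_assoc, hXdXXd]
  refine ⟨⟨(c • Wᵀ * Xd)ᵀ, ?_, ?_⟩, ?_⟩
  · rw [specNorm_eq_l2_opNorm, transpose_transpose, Matrix.mul_assoc, Matrix.smul_mul, hWX,
      norm_smul, Real.norm_of_nonneg hc.le, ← conjTranspose_eq_transpose_of_trivial,
      l2_opNorm_conjTranspose]
    exact mul_le_of_le_one_right hc.le (l2_opNorm_polarIsometry_le_one A)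
  · rw [transpose_transpose, Matrix.mul_assoc, Matrix.smul_mul, trace_smul,
      trace_transpose_polarIsometry_mul, smul_eq_mul]
  · rintro x ⟨Λ, hΛ, rfl⟩
    rw [← hY, ← Matrix.mul_assoc]
    calc ((Λᵀ * X) * A).trace ≤ specNorm (Λᵀ * X) * nuclearNorm A := by
          rw [specNorm_eq_l2_opNorm]
          exact trace_mul_le_l2_opNorm_mul_nuclearNorm A _
      _ ≤ c * nuclearNorm A := mul_le_mul_of_nonneg_right hΛ (nuclearNorm_nonneg A)
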